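/- arXiv:2402.01429 — 3 statements merged into one kernel-verified Lean document; each statement's English description precedes it below -/
import Mathlib

section
/- Let r₂ be the formal power series with r₂ = z + z·r₂² (the Catalan-type series). For every integer j ≥ 1, the coefficient of z^{j+2n} in r₂^j equals j·(2n+j-1)!/(n!·(n+j)!), and all other coefficients of r₂^j vanish. -/
/-!
Writing the quadratic as `r = X * r ^ 2 + X` gives `r ^ (k + 1) = X * r ^ k + X * r ^ (k + 2)`, so the
coefficients `c k m` of `r ^ k` obey the ballot recurrence `c (k + 1) (m + 1) = c k m + c (k + 2) m`.
Together with `c 0 m = [m = 0]` and `c (k + 1) 0 = 0`, this forces `c j m` to vanish unless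
`m = j + 2 n`, and the ballot numbers `j (2n + j - 1)! / (n! (n + j)!)` satisfy the same recurrence.
-/

open PowerSeries

namespace PowerSeries

section Recurrence

variable {R : Type*} [CommSemiring R] {r : R⟦X⟧}

theorem constantCoeff_eq_zero_of_eq_X_mul_sq_add_X (hr : r = X * r ^ 2 + X) :
    constantCoeff r = 0 := by
  rw [hr]
  simp

theorem coeff_succ_pow_succ_of_eq_X_mul_sq_add_X (hr : r = X * r ^ 2 + X) (k m : ℕ) :
    coeff (m + 1) (r ^ (k + 1)) = coeff m (r ^ k) + coeff m (r ^ (k + 2)) := by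
  have hsplit : r ^ (k + 1) = X * r ^ k + X * r ^ (k + 2) := by
    calc r ^ (k + 1) = (X * r ^ 2 + X) * r ^ k := by rw [← hr, pow_succ']
      _ = X * r ^ k + X * r ^ (k + 2) := by ring
  rw [hsplit, map_add, coeff_succ_X_mul, coeff_succ_X_mul]

theorem coeff_pow_eq_zero_of_eq_X_mul_sq_add_X (hr : r = X * r ^ 2 + X) :
    ∀ m j : ℕ, (¬ ∃ n : ℕ, m = j + 2 * n) → coeff m (r ^ j) = 0
  | 0, 0, h => absurd ⟨0, rfl⟩ h
  | 0, j + 1, _ => by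
    rw [coeff_zero_eq_constantCoeff_apply, map_pow,
      constantCoeff_eq_zero_of_eq_X_mul_sq_add_X hr, zero_pow j.succ_ne_zero]
  | m + 1, 0, _ => by simp [coeff_one]
  | m + 1, k + 1, h => by
    rw [coeff_succ_pow_succ_of_eq_X_mul_sq_add_X hr,
      coeff_pow_eq_zero_of_eq_X_mul_sq_add_X hr m k ?_,
      coeff_pow_eq_zero_of_eq_X_mul_sq_add_X hr m (k + 2) ?_, add_zero]
    · rintro ⟨n, rfl⟩
      exact h ⟨n + 1, by ring⟩
    · rintro ⟨n, rfl⟩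
      exact h ⟨n, by ring⟩

theorem coeff_pow_self_of_eq_X_mul_sq_add_X (hr : r = X * r ^ 2 + X) :
    ∀ j : ℕ, coeff j (r ^ j) = 1
  | 0 => by simp
  | k + 1 => by
    rw [coeff_succ_pow_succ_of_eq_X_mul_sq_add_X hr, coeff_pow_self_of_eq_X_mul_sq_add_X hr k,
      coeff_pow_eq_zero_of_eq_X_mul_sq_add_X hr k (k + 2) (by rintro ⟨n, hn⟩; omega), add_zero]

end Recurrence

end PowerSeries

-- The truncated subtraction makes `ballotNumber 0 0 = 0`, whereas `coeff 0 (r ^ 0) = 1`.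
noncomputable def ballotNumber (j n : ℕ) : ℚ :=
  (j : ℚ) * (Nat.factorial (2 * n + j - 1)) / ((Nat.factorial n) * (Nat.factorial (n + j)))

theorem ballotNumber_zero_right {j : ℕ} (hj : 0 < j) : ballotNumber j 0 = 1 := by
  obtain ⟨k, rfl⟩ := Nat.exists_eq_add_of_lt hj
  rw [ballotNumber, div_eq_one_iff_eq (by positivity),
    show 2 * 0 + (0 + k + 1) - 1 = k by omega, show 0 + (0 + k + 1) = k + 1 by omega,
    Nat.factorial_succ]
  push_cast
  ring

theorem ballotNumber_zero_left (n : ℕ) : ballotNumber 0 n = 0 := by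
  simp [ballotNumber]

theorem ballotNumber_succ_succ (k s : ℕ) :
    ballotNumber (k + 1) (s + 1) = ballotNumber k (s + 1) + ballotNumber (k + 2) s := by
  unfold ballotNumber
  rw [show 2 * (s + 1) + (k + 1) - 1 = (2 * s + k + 1) + 1 by omega,
    show 2 * (s + 1) + k - 1 = 2 * s + k + 1 by omega,
    show 2 * s + (k + 2) - 1 = 2 * s + k + 1 by omega,
    show (s + 1) + (k + 1) = (s + k + 1) + 1 by omega,
    show s + (k + 2) = (s + k + 1) + 1 by omega,
    show (s + 1) + k = s + k + 1 by omega,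
    Nat.factorial_succ (2 * s + k + 1), Nat.factorial_succ (s + k + 1), Nat.factorial_succ s]
  field_simp
  push_cast
  ring

theorem PowerSeries.coeff_pow_add_two_mul_of_eq_X_mul_sq_add_X {r : ℚ⟦X⟧}
    (hr : r = X * r ^ 2 + X) (n : ℕ) {j : ℕ} (hj : 0 < j) :
    coeff (j + 2 * n) (r ^ j) = ballotNumber j n := by
  induction n generalizing j with
  | zero => simpa [ballotNumber_zero_right hj] using coeff_pow_self_of_eq_X_mul_sq_add_X hr j
  | succ s ih =>
    suffices ∀ k, coeff (k + 2 * (s + 1)) (r ^ k) = ballotNumber k (s + 1) from this j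
    intro k
    induction k with
    | zero => simp [coeff_one, ballotNumber_zero_left]
    | succ k ihk =>
      rw [show k + 1 + 2 * (s + 1) = k + 2 * (s + 1) + 1 by ring,
        coeff_succ_pow_succ_of_eq_X_mul_sq_add_X hr, ihk,
        show k + 2 * (s + 1) = k + 2 + 2 * s by ring, ih (by omega), ballotNumber_succ_succ]

theorem stanley_r2_powers_coeff_general (r₂ : PowerSeries ℚ)
    (hquad : X * r₂^2 - r₂ + X = 0) :
    ∀ j : ℕ, 1 ≤ j →
      (∀ n : ℕ, coeff (j + 2*n) (r₂^j) =
        (j : ℚ) * (Nat.factorial (2*n + j - 1)) /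
          ((Nat.factorial n) * (Nat.factorial (n + j)))) ∧
      (∀ m : ℕ, (¬ ∃ n : ℕ, m = j + 2*n) → coeff m (r₂^j) = 0) := by
  have hr : r₂ = X * r₂ ^ 2 + X := by linear_combination -hquad
  intro j hj
  exact ⟨fun n => coeff_pow_add_two_mul_of_eq_X_mul_sq_add_X hr n hj,
    fun m => coeff_pow_eq_zero_of_eq_X_mul_sq_add_X hr m j⟩

theorem stanley_r2_powers_coeff (r₂ : PowerSeries ℚ)
    (h0 : constantCoeff r₂ = 0)
    (hquad : X * r₂^2 - r₂ + X = 0) :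
    ∀ j : ℕ, 1 ≤ j →
      (∀ n : ℕ, coeff (j + 2*n) (r₂^j) =
        (j : ℚ) * (Nat.factorial (2*n + j - 1)) /
          ((Nat.factorial n) * (Nat.factorial (n + j)))) ∧
      (∀ m : ℕ, (¬ ∃ n : ℕ, m = j + 2*n) → coeff m (r₂^j) = 0) :=
  stanley_r2_powers_coeff_general r₂ hquad
end

section
/- Under the substitution Z = v/(1 + 3v + v²) of formal power series (v a formal variable with zero constant term), the series (1 + Z - √(1-6Z+5Z²))/(2Z) equals 2 + v. -/
/-!
Writing `Z = X / q` with `q = 1 + 3X + X²`, one has `(1 - Z (3 + 2X))² = 1 - 6Z + 5Z²` because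
`Z q = X`. Both this series and `s` have constant term `1`, so in the domain `ℚ⟦X⟧` they coincide,
and then `1 + Z - s = Z (4 + 2X)`.
-/

open PowerSeries

theorem PowerSeries.eq_of_sq_eq_of_constantCoeff_eq_one {R : Type*} [CommRing R] [IsDomain R]
    [NeZero (2 : R)] {a b : R⟦X⟧} (ha : constantCoeff a = 1) (hb : constantCoeff b = 1)
    (h : a ^ 2 = b ^ 2) : a = b := by
  refine (sq_eq_sq_iff_eq_or_eq_neg.mp h).resolve_right fun hab => ?_
  have h1 : (1 : R) = -1 := by simpa [ha, hb] using congrArg constantCoeff hab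
  exact two_ne_zero (show (2 : R) = 0 by linear_combination h1)

theorem sq_one_sub_mul_three_add_two_mul {R : Type*} [CommRing R] {z v : R}
    (hz : z * (1 + 3 * v + v ^ 2) = v) : (1 - z * (3 + 2 * v)) ^ 2 = 1 - 6 * z + 5 * z ^ 2 := by
  linear_combination (4 * z) * hz

theorem skew_r2_substitution (Z s : PowerSeries ℚ)
    (hZ : Z = X * (1 + 3*X + X^2)⁻¹)
    (hs0 : constantCoeff s = 1)
    (hs : s^2 = 1 - 6*Z + 5*Z^2) :
    1 + Z - s = 2*Z * (2 + X) := by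
  have hZq : Z * (1 + 3*X + X^2) = X := by
    rw [hZ, mul_assoc, PowerSeries.inv_mul_cancel _ (by simp), mul_one]
  have hZ0 : constantCoeff Z = 0 := by simp [hZ]
  have hst : s = 1 - Z * (3 + 2*X) :=
    eq_of_sq_eq_of_constantCoeff_eq_one hs0 (by simp [hZ0])
      (hs.trans (sq_one_sub_mul_three_add_two_mul hZq).symm)
  rw [hst]
  ring
end

section
/- Define the weighted trinomial coefficient T(n, k) = [t^k](1 + 3t + t²)ⁿ. For Z = v/(1+3v+v²) and all n ≥ 1, ℓ ≥ 0: the coefficient of Zⁿ in (2+v)^ℓ (where v = v(Z) is the compositional inverse power series) equals Σ_{k=0}^{ℓ} binom(ℓ,k)·2^{ℓ-k}·(T(n-1, n-k) - T(n-1, n-k-2)). -/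
open PowerSeries

/-- Weighted trinomial coefficient `T(n,k) = [t^k](1+3t+t^2)^n`, with `T(n,k)=0` for `k<0`. -/
noncomputable def trinom (n : ℕ) (k : ℤ) : ℚ :=
  if 0 ≤ k then coeff k.toNat ((1 + 3*X + X^2)^n) else 0

/-! The relation `v = Z(1 + 3v + v²)` gives `vᵏ⁺¹ = Z(vᵏ + 3vᵏ⁺¹ + vᵏ⁺²)`, so `[Zⁿ⁺¹]vᵏ`
satisfies, in `n`, the same three-term recurrence `T(n+1,j) = T(n,j) + 3T(n,j-1) + T(n,j-2)` as
the trinomial coefficients; the case `k = 0` is the palindromy `T(n,j) = T(n,2n-j)`. This yields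
the Lagrange inversion formula `[Zⁿ⁺¹]vᵏ = T(n,n+1-k) - T(n,n-1-k)`, and the theorem follows by
expanding `(2 + v)^ℓ` binomially. -/

lemma trinom_of_neg {n : ℕ} {k : ℤ} (hk : k < 0) : trinom n k = 0 :=
  if_neg (not_le.2 hk)

lemma trinom_natCast (n m : ℕ) : trinom n m = coeff m ((1 + 3*X + X^2)^n) := by
  simp [trinom]

lemma trinom_zero (k : ℤ) : trinom 0 k = if k = 0 then 1 else 0 := by
  rcases lt_or_ge k 0 with hk | hk
  · rw [trinom_of_neg hk, if_neg hk.ne]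
  · lift k to ℕ using hk
    simp [trinom_natCast, coeff_one]

lemma coeff_X_pow_mul_trinomial_pow (n d m : ℕ) :
    coeff m (X^d * (1 + 3*X + X^2)^n : ℚ⟦X⟧) = trinom n (m - d) := by
  rw [coeff_X_pow_mul']
  split_ifs with h
  · rw [← trinom_natCast, Nat.cast_sub h]
  · rw [trinom_of_neg (by omega)]

lemma trinom_succ (n : ℕ) (k : ℤ) :
    trinom (n+1) k = trinom n k + 3 * trinom n (k-1) + trinom n (k-2) := by
  rcases lt_or_ge k 0 with hk | hk
  · simp only [trinom_of_neg, hk, (by omega : k - 1 < 0), (by omega : k - 2 < 0)]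
    norm_num
  lift k to ℕ using hk
  have hexpand : ((1 : ℚ⟦X⟧) + 3*X + X^2)^(n+1) =
      X^0 * (1 + 3*X + X^2)^n + C 3 * (X^1 * (1 + 3*X + X^2)^n) + X^2 * (1 + 3*X + X^2)^n := by
    simp only [map_ofNat]; ring
  rw [trinom_natCast, hexpand, map_add, map_add, coeff_C_mul, coeff_X_pow_mul_trinomial_pow,
    coeff_X_pow_mul_trinomial_pow, coeff_X_pow_mul_trinomial_pow]
  simp

lemma trinom_symm (n : ℕ) (k : ℤ) : trinom n (2*n - k) = trinom n k := by
  induction n generalizing k with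
  | zero =>
    simp only [trinom_zero, Nat.cast_zero, mul_zero, zero_sub, neg_eq_zero]
  | succ n ih =>
    rw [trinom_succ, trinom_succ, ← ih k, ← ih (k-1), ← ih (k-2)]
    push_cast
    ring_nf

lemma coeff_add_C_pow {R : Type*} [CommSemiring R] (f : R⟦X⟧) (a : R) (n ℓ : ℕ) :
    coeff n ((f + C a)^ℓ) =
      ∑ k ∈ Finset.range (ℓ + 1), (ℓ.choose k : R) * a^(ℓ - k) * coeff n (f^k) := by
  rw [add_pow, map_sum]
  refine Finset.sum_congr rfl fun k _ => ?_
  rw [← map_pow, ← map_natCast (C (R := R)), mul_assoc, ← map_mul, coeff_mul_C]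
  ring

lemma coeff_zero_pow_of_eq_X_mul {R : Type*} [CommSemiring R] {v w : R⟦X⟧} (hv : v = X * w)
    (k : ℕ) :
    coeff 0 (v^k) = if k = 0 then 1 else 0 := by
  have h0 : constantCoeff v = 0 := by rw [hv]; simp
  simp [coeff_zero_eq_constantCoeff, h0, zero_pow_eq]

section

variable {v : ℚ⟦X⟧}

lemma coeff_succ_pow_succ_of_eq_X_mul_trinomial (hv : v = X * (1 + 3*v + v^2)) (n k : ℕ) :
    coeff (n+1) (v^(k+1)) = coeff n (v^k) + 3 * coeff n (v^(k+1)) + coeff n (v^(k+2)) := by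
  have hpow : v^(k+1) = X * (v^k + C 3 * v^(k+1) + v^(k+2)) := by
    rw [pow_succ]
    nth_rewrite 2 [hv]
    simp only [map_ofNat]; ring
  conv_lhs => rw [hpow]
  rw [coeff_succ_X_mul, map_add, map_add, coeff_C_mul]

lemma coeff_succ_pow_of_eq_X_mul_trinomial (hv : v = X * (1 + 3*v + v^2)) (n k : ℕ) :
    coeff (n+1) (v^k) = trinom n (n + 1 - k) - trinom n (n - 1 - k) := by
  have hzero (n : ℕ) :
      coeff (n+1) (v^0) = trinom n (n + 1 - (0 : ℕ)) - trinom n (n - 1 - (0 : ℕ)) := by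
    rw [pow_zero, coeff_one, if_neg n.succ_ne_zero, ← trinom_symm n (n + 1 - (0 : ℕ))]
    ring_nf
  induction n generalizing k with
  | zero =>
    cases k with
    | zero => exact hzero 0
    | succ k =>
      rw [coeff_succ_pow_succ_of_eq_X_mul_trinomial hv, coeff_zero_pow_of_eq_X_mul hv,
        coeff_zero_pow_of_eq_X_mul hv, coeff_zero_pow_of_eq_X_mul hv,
        trinom_of_neg (by omega : ((0 : ℕ) : ℤ) - 1 - (k + 1 : ℕ) < 0),
        show ((0 : ℕ) : ℤ) + 1 - (k + 1 : ℕ) = -k by push_cast; ring, trinom_zero]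
      simp
  | succ n ih =>
    cases k with
    | zero => exact hzero (n+1)
    | succ k =>
      rw [coeff_succ_pow_succ_of_eq_X_mul_trinomial hv, ih, ih, ih, trinom_succ, trinom_succ]
      push_cast
      ring_nf

end

theorem skew_r2_power_coeffs_general (v : PowerSeries ℚ)
    (hv : v = X * (1 + 3*v + v^2)) :
    ∀ n : ℕ, 1 ≤ n → ∀ ℓ : ℕ,
      coeff n ((2 + v)^ℓ) =
        ∑ k ∈ Finset.range (ℓ + 1),
          (Nat.choose ℓ k : ℚ) * 2^(ℓ - k) *
            (trinom (n - 1) ((n : ℤ) - k) - trinom (n - 1) ((n : ℤ) - k - 2)) := by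
  intro n hn ℓ
  obtain ⟨m, rfl⟩ := Nat.exists_eq_add_one.mpr hn
  rw [add_comm (2 : ℚ⟦X⟧) v, ← map_ofNat C 2, coeff_add_C_pow]
  refine Finset.sum_congr rfl fun k _ => ?_
  rw [coeff_succ_pow_of_eq_X_mul_trinomial hv, Nat.add_sub_cancel]
  push_cast
  ring_nf

theorem skew_r2_power_coeffs (v : PowerSeries ℚ)
    (h0 : constantCoeff v = 0)
    (hv : v = X * (1 + 3*v + v^2)) :
    ∀ n : ℕ, 1 ≤ n → ∀ ℓ : ℕ,
      coeff n ((2 + v)^ℓ) =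
        ∑ k ∈ Finset.range (ℓ + 1),
          (Nat.choose ℓ k : ℚ) * 2^(ℓ - k) *
            (trinom (n - 1) ((n : ℤ) - k) - trinom (n - 1) ((n : ℤ) - k - 2)) :=
  skew_r2_power_coeffs_general v hv
end
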